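/- arXiv:2103.16185 — 4 statements merged into one kernel-verified Lean document; each statement's English description precedes it below -/
import Mathlib

section
/- Let A = (Q, Σ, δ) be a deterministic finite automaton and p, q ∈ Q. If there exists a word u with δ(p, u) = δ(q, u), then there exists such a word of length at most C(|Q|, 2) = |Q|(|Q|-1)/2. -/
/-- Transition function extended to words. -/
def deltaStar {Q A : Type*} (δ : Q → A → Q) (q : Q) (w : List A) : Q :=
  w.foldl δ q

/-- Additive weight of a word. -/
def wordWeight {A : Type*} (γ : A → ℕ) (w : List A) : ℕ :=
  (w.map γ).sum

/-- Image of a set of states under a word. -/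
def setImage {Q A : Type*} [DecidableEq Q] (δ : Q → A → Q) (P : Finset Q) (w : List A) : Finset Q :=
  P.image (fun q => deltaStar δ q w)

/-!
The automaton acts on unordered pairs of states, and `p, q` are merged by `u` exactly when
`u` sends `s(p, q)` into the diagonal. A shortest word driving a state of any automaton into a
target set `T` visits pairwise distinct states outside `T` before its last letter (a repeated
state could be cut out), so its length is at most the number of states outside `T`. For the
pair automaton there are `C(|Q|, 2)` non-diagonal pairs.
-/

section Reachability

variable {S A : Type*} (δ : S → A → S)

theorem deltaStar_append (s : S) (v w : List A) :
    deltaStar δ s (v ++ w) = deltaStar δ (deltaStar δ s v) w :=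
  List.foldl_append

theorem deltaStar_take_append_drop_of_eq (s : S) (w : List A) {i j : ℕ}
    (h : deltaStar δ s (w.take i) = deltaStar δ s (w.take j)) :
    deltaStar δ s (w.take i ++ w.drop j) = deltaStar δ s w := by
  rw [deltaStar_append, h, ← deltaStar_append, List.take_append_drop]

theorem length_le_card_of_shortest [Fintype S] (T : Set S) [DecidablePred (· ∈ T)]
    (s : S) (w : List A) (hw : deltaStar δ s w ∈ T)
    (hmin : ∀ v : List A, v.length < w.length → deltaStar δ s v ∉ T) :
    w.length ≤ Fintype.card {x // x ∉ T} := by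
  have hout (i : Fin w.length) : deltaStar δ s (w.take i) ∉ T :=
    hmin _ (by simp [i.isLt])
  have hinj : Function.Injective fun i : Fin w.length => (⟨_, hout i⟩ : {x // x ∉ T}) := by
    intro i j hij
    wlog hlt : (i : ℕ) < j generalizing i j
    · rcases (not_lt.mp hlt).lt_or_eq with hji | hji
      · exact (this hij.symm hji).symm
      · exact Fin.ext hji.symm
    have hcut := deltaStar_take_append_drop_of_eq δ s w (congrArg Subtype.val hij)
    refine absurd (hcut ▸ hw) (hmin _ ?_)
    simp only [List.length_append, List.length_take, List.length_drop]
    omega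
  simpa using Fintype.card_le_of_injective _ hinj

theorem exists_deltaStar_mem_length_le_card [Fintype S] (T : Set S) [DecidablePred (· ∈ T)]
    (s : S) (h : ∃ w : List A, deltaStar δ s w ∈ T) :
    ∃ w : List A, deltaStar δ s w ∈ T ∧ w.length ≤ Fintype.card {x // x ∉ T} := by
  classical
  have hlen : ∃ n, ∃ w : List A, w.length = n ∧ deltaStar δ s w ∈ T :=
    let ⟨w, hw⟩ := h; ⟨_, w, rfl, hw⟩
  obtain ⟨w, hwn, hw⟩ := Nat.find_spec hlen
  refine ⟨w, hw, length_le_card_of_shortest δ T s w hw fun v hv hvT => ?_⟩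
  exact Nat.find_min hlen (hwn ▸ hv) ⟨v, rfl, hvT⟩

end Reachability

section PairAutomaton

variable {Q A : Type*} (δ : Q → A → Q)

def pairDelta (s : Sym2 Q) (a : A) : Sym2 Q :=
  s.map (δ · a)

theorem deltaStar_pairDelta (s : Sym2 Q) (w : List A) :
    deltaStar (pairDelta δ) s w = s.map (deltaStar δ · w) := by
  induction w generalizing s with
  | nil => simp [deltaStar]
  | cons a w ih =>
    simp only [deltaStar, List.foldl_cons] at ih ⊢
    rw [ih, pairDelta, Sym2.map_map]
    rfl

theorem deltaStar_pairDelta_isDiag_iff (p q : Q) (w : List A) :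
    (deltaStar (pairDelta δ) s(p, q) w).IsDiag ↔ deltaStar δ p w = deltaStar δ q w := by
  rw [deltaStar_pairDelta, Sym2.map_mk, Sym2.mk_isDiag_iff]

end PairAutomaton

theorem pair_merge_short {Q A : Type*} [Fintype Q] (δ : Q → A → Q) (p q : Q)
    (h : ∃ u : List A, deltaStar δ p u = deltaStar δ q u) :
    ∃ u : List A, deltaStar δ p u = deltaStar δ q u ∧
      u.length ≤ (Fintype.card Q).choose 2 := by
  classical
  simp only [← deltaStar_pairDelta_isDiag_iff δ] at h ⊢
  rw [← Sym2.card_subtype_not_diag]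
  exact exists_deltaStar_mem_length_le_card (pairDelta δ) {x | x.IsDiag} s(p, q) h
end

section
/- Let A = (Q, Σ, δ, γ) be a synchronizing WFA with |Q| = n ≥ 1 and γ(a) ≤ k for all a ∈ Σ. Then A admits a synchronizing word u with γ(u) ≤ k · (n - 1) · C(n, 2); in particular the minimal weight of a synchronizing word is at most k · n³ / 2. -/
namespace deltaStar

variable {Q A : Type*} (δ : Q → A → Q)

lemma append (q : Q) (u v : List A) :
    deltaStar δ q (u ++ v) = deltaStar δ (deltaStar δ q u) v :=
  List.foldl_append

lemma append_eq_append_iff_of_sym2_eq {p q : Q} {x y : List A}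
    (h : s(deltaStar δ p x, deltaStar δ q x) = s(deltaStar δ p y, deltaStar δ q y))
    (z : List A) :
    deltaStar δ p (x ++ z) = deltaStar δ q (x ++ z) ↔
      deltaStar δ p (y ++ z) = deltaStar δ q (y ++ z) := by
  simp only [append]
  rcases Sym2.eq_iff.mp h with ⟨hp, hq⟩ | ⟨hp, hq⟩
  · rw [hp, hq]
  · rw [hp, hq, eq_comm]

variable [Fintype Q]

/-- A merging word longer than `C(|Q|, 2)` either has a shorter merging prefix or passes twice
through the same unordered pair of distinct states, and the loop between them can be cut out. -/
lemma exists_shorter_of_choose_two_lt {p q : Q} {w : List A}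
    (hw : deltaStar δ p w = deltaStar δ q w) (hlen : (Fintype.card Q).choose 2 < w.length) :
    ∃ w' : List A, deltaStar δ p w' = deltaStar δ q w' ∧ w'.length < w.length := by
  classical
  set C := (Fintype.card Q).choose 2
  by_cases hprefix : ∃ i ≤ C, deltaStar δ p (w.take i) = deltaStar δ q (w.take i)
  · obtain ⟨i, hi, hmerge⟩ := hprefix
    exact ⟨w.take i, hmerge, by simp only [List.length_take]; omega⟩
  push Not at hprefix
  let pairAt (i : Fin (C + 1)) : {s : Sym2 Q // ¬ s.IsDiag} :=
    ⟨s(deltaStar δ p (w.take i), deltaStar δ q (w.take i)),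
      Sym2.mk_isDiag_iff.not.mpr (hprefix i (Nat.lt_succ_iff.mp i.isLt))⟩
  obtain ⟨i, j, hij, hpair⟩ := Fintype.exists_ne_map_eq_of_card_lt pairAt
    (by rw [Sym2.card_subtype_not_diag, Fintype.card_fin]; omega)
  have hcut : ∀ {i j : Fin (C + 1)}, i < j → pairAt i = pairAt j →
      ∃ w' : List A, deltaStar δ p w' = deltaStar δ q w' ∧ w'.length < w.length := by
    intro i j hlt heq
    refine ⟨w.take i ++ w.drop j, ?_, ?_⟩
    · rw [append_eq_append_iff_of_sym2_eq δ (congrArg Subtype.val heq), List.take_append_drop]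
      exact hw
    · have : (j : ℕ) ≤ C := Nat.lt_succ_iff.mp j.isLt
      simp only [List.length_append, List.length_take, List.length_drop]
      omega
  rcases lt_or_gt_of_ne hij with hlt | hlt
  · exact hcut hlt hpair
  · exact hcut hlt hpair.symm

lemma exists_length_le_choose_two {p q : Q} {w : List A}
    (hw : deltaStar δ p w = deltaStar δ q w) :
    ∃ u : List A, deltaStar δ p u = deltaStar δ q u ∧ u.length ≤ (Fintype.card Q).choose 2 := by
  induction hlen : w.length using Nat.strong_induction_on generalizing w with
  | _ N ih =>
    by_cases hN : N ≤ (Fintype.card Q).choose 2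
    · exact ⟨w, hw, hlen ▸ hN⟩
    obtain ⟨w', hw', hlt⟩ := exists_shorter_of_choose_two_lt δ hw (by omega)
    exact ih _ (hlen ▸ hlt) hw' rfl

end deltaStar

namespace setImage

variable {Q A : Type*} [DecidableEq Q] (δ : Q → A → Q)

lemma append (S : Finset Q) (u v : List A) :
    setImage δ S (u ++ v) = setImage δ (setImage δ S u) v := by
  simp only [setImage, Finset.image_image]
  exact Finset.image_congr fun q _ => deltaStar.append δ q u v

lemma card_lt_of_merges {S : Finset Q} {p q : Q} (hp : p ∈ S) (hq : q ∈ S) (hpq : p ≠ q)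
    {u : List A} (hu : deltaStar δ p u = deltaStar δ q u) :
    (setImage δ S u).card < S.card :=
  Finset.card_image_le.lt_of_ne fun h => hpq (Finset.injOn_of_card_image_eq h hp hq hu)

lemma exists_card_le_one [Fintype Q]
    (hpair : ∀ p q : Q, ∃ w : List A, deltaStar δ p w = deltaStar δ q w) (S : Finset Q) :
    ∃ u : List A, (setImage δ S u).card ≤ 1 ∧
      u.length ≤ (S.card - 1) * (Fintype.card Q).choose 2 := by
  induction hcard : S.card using Nat.strong_induction_on generalizing S with
  | _ N ih =>
    by_cases hN : N ≤ 1
    · exact ⟨[], by simpa [setImage, deltaStar, hcard] using hN, by simp⟩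
    obtain ⟨p, hp, q, hq, hpq⟩ := Finset.one_lt_card.mp (show 1 < S.card by omega)
    obtain ⟨w, hw⟩ := hpair p q
    obtain ⟨u₁, hu₁, hlen₁⟩ := deltaStar.exists_length_le_choose_two δ hw
    have hlt := card_lt_of_merges δ hp hq hpq hu₁
    obtain ⟨u₂, hcard₂, hlen₂⟩ := ih _ (hcard ▸ hlt) (setImage δ S u₁) rfl
    refine ⟨u₁ ++ u₂, by rwa [append], ?_⟩
    have : (setImage δ S u₁).card - 1 ≤ N - 2 := by omega
    calc (u₁ ++ u₂).length
        ≤ (Fintype.card Q).choose 2 + (N - 2) * (Fintype.card Q).choose 2 := by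
          rw [List.length_append]
          exact add_le_add hlen₁ (hlen₂.trans (Nat.mul_le_mul_right _ this))
      _ = (N - 1) * (Fintype.card Q).choose 2 := by
          rw [show N - 1 = N - 2 + 1 by omega, add_one_mul, add_comm]

end setImage

lemma wordWeight_le_mul_length {A : Type*} {γ : A → ℕ} {k : ℕ} (hk : ∀ a, γ a ≤ k)
    (u : List A) : wordWeight γ u ≤ k * u.length := by
  calc wordWeight γ u ≤ (u.map γ).length • k :=
        List.sum_le_card_nsmul _ _ fun _ hx => by
          obtain ⟨a, _, rfl⟩ := List.mem_map.mp hx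
          exact hk a
    _ = k * u.length := by simp [mul_comm]

lemma sub_one_mul_choose_two_le (n : ℕ) : (n - 1) * n.choose 2 ≤ n ^ 3 / 2 := by
  rw [Nat.le_div_iff_mul_le two_pos, mul_assoc]
  calc (n - 1) * (n.choose 2 * 2) ≤ (n - 1) * (n * (n - 1)) := by
        rw [Nat.choose_two_right]
        exact Nat.mul_le_mul_left _ (Nat.div_mul_le_self _ _)
    _ ≤ n * (n * n) := by gcongr <;> omega
    _ = n ^ 3 := by ring

theorem sync_word_weight_bound_general {Q A : Type*} [Fintype Q]
    (δ : Q → A → Q) (γ : A → ℕ) (k n : ℕ) (hn : n = Fintype.card Q)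
    (hk : ∀ a : A, γ a ≤ k)
    (hsync : ∃ (w : List A) (qbar : Q), ∀ p : Q, deltaStar δ p w = qbar) :
    ∃ u : List A, (∃ qbar : Q, ∀ p : Q, deltaStar δ p u = qbar) ∧
      wordWeight γ u ≤ k * (n - 1) * n.choose 2 ∧
      wordWeight γ u ≤ k * n ^ 3 / 2 := by
  classical
  obtain ⟨w, q₀, hw⟩ := hsync
  obtain ⟨u, hcard, hlen⟩ := setImage.exists_card_le_one δ
    (fun p q => ⟨w, by rw [hw p, hw q]⟩) Finset.univ
  have hsyncu (p : Q) : deltaStar δ p u = deltaStar δ q₀ u :=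
    Finset.card_le_one.mp hcard _ (Finset.mem_image_of_mem _ (Finset.mem_univ p))
      _ (Finset.mem_image_of_mem _ (Finset.mem_univ q₀))
  have hweight : wordWeight γ u ≤ k * (n - 1) * n.choose 2 := by
    calc wordWeight γ u ≤ k * u.length := wordWeight_le_mul_length hk u
      _ ≤ k * ((n - 1) * n.choose 2) := by
          rw [hn]; exact Nat.mul_le_mul_left _ (by simpa using hlen)
      _ = k * (n - 1) * n.choose 2 := (mul_assoc _ _ _).symm
  refine ⟨u, ⟨_, hsyncu⟩, hweight, hweight.trans ?_⟩
  rw [mul_assoc]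
  exact (Nat.mul_le_mul_left k (sub_one_mul_choose_two_le n)).trans (Nat.mul_div_le_mul_div_assoc _ _ _)

theorem sync_word_weight_bound {Q A : Type*} [Fintype Q] [Nonempty Q]
    (δ : Q → A → Q) (γ : A → ℕ) (k n : ℕ) (hn : n = Fintype.card Q)
    (hn1 : 1 ≤ n) (hk : ∀ a : A, γ a ≤ k)
    (hsync : ∃ (w : List A) (qbar : Q), ∀ p : Q, deltaStar δ p w = qbar) :
    ∃ u : List A, (∃ qbar : Q, ∀ p : Q, deltaStar δ p u = qbar) ∧
      wordWeight γ u ≤ k * (n - 1) * n.choose 2 ∧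
      wordWeight γ u ≤ k * n ^ 3 / 2 :=
  sync_word_weight_bound_general δ γ k n hn hk hsync
end

section
/- Consider the WFA A from the previous context (4 states, letters a, b, c with weights 1, 1, 6). Every synchronizing word for A with minimal weight has weight at least 9; in particular no synchronizing word of weight less than 9 exists. -/
/-- Transition function of the example automaton: letters 0 = a, 1 = b, 2 = c. -/
def exDelta : Fin 4 → Fin 3 → Fin 4
  | 0, 0 => 1 | 1, 0 => 2 | 2, 0 => 3 | 3, 0 => 0
  | 0, 1 => 0 | 1, 1 => 1 | 2, 1 => 2 | 3, 1 => 0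
  | 0, 2 => 0 | 1, 2 => 1 | 2, 2 => 0 | 3, 2 => 3

/-- Weights: γ(a) = 1, γ(b) = 1, γ(c) = 6. -/
def exGamma : Fin 3 → ℕ
  | 0 => 1 | 1 => 1 | 2 => 6

section Potential

variable {Q A : Type*} [DecidableEq Q] (δ : Q → A → Q)

theorem setImage_nil (P : Finset Q) : setImage δ P [] = P := by
  simp [setImage, deltaStar]

theorem setImage_cons (P : Finset Q) (x : A) (w : List A) :
    setImage δ P (x :: w) = setImage δ (P.image (δ · x)) w := by
  simp [setImage, deltaStar, Finset.image_image, Function.comp_def]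

theorem wordWeight_cons (γ : A → ℕ) (x : A) (w : List A) :
    wordWeight γ (x :: w) = γ x + wordWeight γ w := by
  simp [wordWeight]

theorem le_wordWeight_of_potential (γ : A → ℕ) (μ : Finset Q → ℕ)
    (step : ∀ P x, μ P ≤ γ x + μ (P.image (δ · x)))
    (subsingleton : ∀ P : Finset Q, P.card ≤ 1 → μ P = 0) :
    ∀ (w : List A) (P : Finset Q), (setImage δ P w).card ≤ 1 → μ P ≤ wordWeight γ w
  | [], P, hw => by
    rw [setImage_nil] at hw
    simp [subsingleton P hw]
  | x :: w, P, hw => by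
    rw [setImage_cons] at hw
    have ih := le_wordWeight_of_potential γ μ step subsingleton w _ hw
    rw [wordWeight_cons]
    exact (step P x).trans (Nat.add_le_add_left ih _)

theorem card_setImage_univ_le_one [Fintype Q] {w : List A}
    (hsync : ∃ qbar : Q, ∀ q : Q, deltaStar δ q w = qbar) :
    (setImage δ Finset.univ w).card ≤ 1 := by
  obtain ⟨qbar, hq⟩ := hsync
  refine Finset.card_le_one.mpr fun a ha b hb => ?_
  obtain ⟨p, -, rfl⟩ := Finset.mem_image.mp ha
  obtain ⟨r, -, rfl⟩ := Finset.mem_image.mp hb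
  rw [hq p, hq r]

end Potential

/-- The least weight of a word mapping `P` into a single state of `exDelta`, found by a
shortest-path search over the subsets of states. -/
def exPotential (P : Finset (Fin 4)) : ℕ :=
  match decide (0 ∈ P), decide (1 ∈ P), decide (2 ∈ P), decide (3 ∈ P) with
  | true,  true,  true,  true  => 9
  | true,  true,  true,  false => 8
  | true,  true,  false, true  => 5
  | true,  false, true,  true  => 6
  | false, true,  true,  true  => 7
  | true,  true,  false, false => 4
  | true,  false, true,  false => 6
  | true,  false, false, true  => 1
  | false, true,  true,  false => 3
  | false, true,  false, true  => 5
  | false, false, true,  true  => 2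
  | _,     _,     _,     _     => 0

theorem exPotential_le_add (P : Finset (Fin 4)) (x : Fin 3) :
    exPotential P ≤ exGamma x + exPotential (P.image (exDelta · x)) := by
  revert P x; decide

theorem exPotential_eq_zero (P : Finset (Fin 4)) (hP : P.card ≤ 1) : exPotential P = 0 := by
  revert P; decide

theorem exPotential_univ : exPotential Finset.univ = 9 := by decide

theorem example_min_weight_ge_nine :
    ∀ w : List (Fin 3),
      (∃ qbar : Fin 4, ∀ q : Fin 4, deltaStar exDelta q w = qbar) →
        9 ≤ wordWeight exGamma w := by
  intro w hsync
  rw [← exPotential_univ]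
  exact le_wordWeight_of_potential exDelta exGamma exPotential exPotential_le_add
    exPotential_eq_zero w _ (card_setImage_univ_le_one exDelta hsync)
end

section
/- Let A = (Q, Σ, δ, γ) be a WFA with |Q| = n and all letter weights at most k. Suppose P₁, ..., P_{n-1} are subsets of Q and w₁, ..., w_{n-1} are words such that P_i ⊆ T_i where T₁ = Q, T_{i+1} = δ(T_i, w_i), |δ(P_i, w_i)| = 1 whenever |P_i| > 1, and γ(w_i) ≤ (|P_i| - 1) · k · C(n, 2). If |T_n| = 1, then γ(w₁···w_{n-1}) ≤ k · (n - 1) · C(n, 2). -/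
/-!
Each word `wᵢ` collapses `Pᵢ ⊆ Tᵢ` to at most one state, so it shrinks `Tᵢ` by at least
`|Pᵢ| - 1`. These decreases telescope from `|T₁| = n` to `|Tₙ| = 1`, hence `∑ (|Pᵢ| - 1) ≤ n - 1`,
and summing the weight bounds `γ(wᵢ) ≤ (|Pᵢ| - 1) · k · C(n, 2)` gives the claim.
-/

open Finset

section ImageCard

variable {α β : Type*} [DecidableEq β] {f : α → β} {P T : Finset α}

/-- `#T - #(T.image f) ≥ #P - #(P.image f)`, stated without truncated subtraction. -/
theorem card_image_add_card_le_of_subset (hPT : P ⊆ T) :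
    #(T.image f) + #P ≤ #T + #(P.image f) := by
  classical
  have hsplit : T.image f = (T \ P).image f ∪ P.image f := by
    rw [← image_union, sdiff_union_of_subset hPT]
  calc #(T.image f) + #P ≤ #((T \ P).image f) + #(P.image f) + #P := by
        rw [hsplit]; gcongr; exact card_union_le _ _
    _ ≤ #(T \ P) + #P + #(P.image f) := by have := card_image_le (s := T \ P) (f := f); omega
    _ = #T + #(P.image f) := by rw [card_sdiff_add_card_eq_card hPT]

theorem card_image_add_card_sub_one_le (hPT : P ⊆ T) (hP : #(P.image f) ≤ 1) :
    #(T.image f) + (#P - 1) ≤ #T := by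
  have := card_image_add_card_le_of_subset (f := f) hPT
  have := card_image_le (s := P) (f := f)
  omega

end ImageCard

theorem sum_range_add_le_of_succ_add_le {t d : ℕ → ℕ} {m : ℕ}
    (h : ∀ i < m, t (i + 1) + d i ≤ t i) : ∑ i ∈ range m, d i + t m ≤ t 0 := by
  induction m with
  | zero => simp
  | succ m ih =>
    have := ih fun i hi => h i (by omega)
    have := h m (by omega)
    rw [sum_range_succ]
    omega

theorem wordWeight_flatten_map_range {A : Type*} (γ : A → ℕ) (w : ℕ → List A) (m : ℕ) :
    wordWeight γ ((List.range m).map w).flatten = ∑ i ∈ range m, wordWeight γ (w i) := by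
  simp only [wordWeight, List.map_flatten, List.sum_flatten, List.map_map]
  simp [sum_eq_multiset_sum, range_val, Multiset.range, Function.comp_def]

theorem greedy_weight_bound_general {Q A : Type*} [Fintype Q] [DecidableEq Q]
    (δ : Q → A → Q) (γ : A → ℕ) (k n : ℕ) (hn : n = Fintype.card Q)
    (P : ℕ → Finset Q) (T : ℕ → Finset Q) (w : ℕ → List A)
    (hT1 : T 1 = Finset.univ)
    (hstep : ∀ i, 1 ≤ i → i ≤ n - 1 → T (i + 1) = setImage δ (T i) (w i))
    (hsub : ∀ i, 1 ≤ i → i ≤ n - 1 → P i ⊆ T i)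
    (hmerge : ∀ i, 1 ≤ i → i ≤ n - 1 → 1 < (P i).card →
      (setImage δ (P i) (w i)).card = 1)
    (hwt : ∀ i, 1 ≤ i → i ≤ n - 1 →
      wordWeight γ (w i) ≤ ((P i).card - 1) * k * n.choose 2)
    (hTn : (T n).card = 1) :
    wordWeight γ (((List.range (n - 1)).map (fun i => w (i + 1))).flatten) ≤
      k * (n - 1) * n.choose 2 := by
  rcases Nat.eq_zero_or_pos n with rfl | hn_pos
  · simp [wordWeight]
  have hdrop : ∀ i < n - 1, #(T (i + 1 + 1)) + (#(P (i + 1)) - 1) ≤ #(T (i + 1)) := by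
    intro i hi
    have hmerge' : #(setImage δ (P (i + 1)) (w (i + 1))) ≤ 1 := by
      by_cases hP : 1 < #(P (i + 1))
      · exact (hmerge _ (by omega) (by omega) hP).le
      · exact card_image_le.trans (by omega)
    rw [hstep _ (by omega) (by omega)]
    exact card_image_add_card_sub_one_le (hsub _ (by omega) (by omega)) hmerge'
  have hsum : ∑ i ∈ range (n - 1), (#(P (i + 1)) - 1) ≤ n - 1 := by
    have := sum_range_add_le_of_succ_add_le (t := fun i => #(T (i + 1))) hdrop
    rw [Nat.sub_add_cancel hn_pos, hTn, hT1, card_univ, ← hn] at this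
    omega
  rw [wordWeight_flatten_map_range]
  calc ∑ i ∈ range (n - 1), wordWeight γ (w (i + 1))
      ≤ ∑ i ∈ range (n - 1), (#(P (i + 1)) - 1) * k * n.choose 2 :=
        sum_le_sum fun i hi => hwt _ (by omega) (by have := mem_range.mp hi; omega)
    _ = (∑ i ∈ range (n - 1), (#(P (i + 1)) - 1)) * k * n.choose 2 := by rw [sum_mul, sum_mul]
    _ ≤ (n - 1) * k * n.choose 2 := by gcongr
    _ = k * (n - 1) * n.choose 2 := by ring

theorem greedy_weight_bound {Q A : Type*} [Fintype Q] [DecidableEq Q]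
    (δ : Q → A → Q) (γ : A → ℕ) (k n : ℕ) (hn : n = Fintype.card Q)
    (hk : ∀ a : A, γ a ≤ k)
    (P : ℕ → Finset Q) (T : ℕ → Finset Q) (w : ℕ → List A)
    (hT1 : T 1 = Finset.univ)
    (hstep : ∀ i, 1 ≤ i → i ≤ n - 1 → T (i + 1) = setImage δ (T i) (w i))
    (hsub : ∀ i, 1 ≤ i → i ≤ n - 1 → P i ⊆ T i)
    (hmerge : ∀ i, 1 ≤ i → i ≤ n - 1 → 1 < (P i).card →
      (setImage δ (P i) (w i)).card = 1)
    (hwt : ∀ i, 1 ≤ i → i ≤ n - 1 →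
      wordWeight γ (w i) ≤ ((P i).card - 1) * k * n.choose 2)
    (hTn : (T n).card = 1) :
    wordWeight γ (((List.range (n - 1)).map (fun i => w (i + 1))).flatten) ≤
      k * (n - 1) * n.choose 2 :=
  greedy_weight_bound_general δ γ k n hn P T w hT1 hstep hsub hmerge hwt hTn
end
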